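/- arXiv:1606.03651 — 2 statements merged into one kernel-verified Lean document; each statement's English description precedes it below -/
import Mathlib

section
/- Let X be a real-valued random variable with unbounded distribution F and Y a nonnegative random variable with distribution G, neither degenerate at zero, and suppose (X,Y) follows an FGM distribution with parameter θ=−1. Let β_G=sup{y: G(y)<1} denote the right endpoint of G and suppose P(Y=β_G)>0, and that Assumption 2 holds (Ḡ(bx)=o(H̄(x)) as x→∞ for every b>0, where H is the distribution of XY). Then P(XY>x) ~ ∫_0^∞ (1−(G(y)+G(y−)−1)) F̄(x/y) G(dy) as x→∞, where G(y−)=lim_{δ→0+} G(y−δ). -/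
open MeasureTheory ProbabilityTheory Filter Set Asymptotics

noncomputable section

/-- The tail (survival) function `x ↦ P(Z > x)` of a random variable `Z`. -/
def rvTail {Ω : Type*} [MeasureSpace Ω] (Z : Ω → ℝ) (x : ℝ) : ℝ :=
  (ℙ {ω | x < Z ω}).toReal

/-- The cumulative distribution function `x ↦ P(Z ≤ x)` of a random variable `Z`. -/
def rvCdf {Ω : Type*} [MeasureSpace Ω] (Z : Ω → ℝ) (x : ℝ) : ℝ :=
  (ℙ {ω | Z ω ≤ x}).toReal

/-- The left limit of the cdf, `G(y-) = P(Z < y)`. -/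
def rvCdfLeft {Ω : Type*} [MeasureSpace Ω] (Z : Ω → ℝ) (y : ℝ) : ℝ :=
  (ℙ {ω | Z ω < y}).toReal

/-- The distribution of `Z` is unbounded (above): its tail is positive for every `x > 0`. -/
def UnboundedDist {Ω : Type*} [MeasureSpace Ω] (Z : Ω → ℝ) : Prop :=
  ∀ x > 0, 0 < rvTail Z x

/-- The support `D_Z = {y : P(Z ∈ (y - δ, y + δ)) > 0 for all δ > 0}` of the
distribution of `Z`. -/
def distSupport {Ω : Type*} [MeasureSpace Ω] (Z : Ω → ℝ) : Set ℝ :=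
  {y | ∀ δ > 0, 0 < ℙ {ω | Z ω ∈ Ioo (y - δ) (y + δ)}}

/-- The distribution of `Z` belongs to the class `L(γ)`: it is unbounded above and
`P(Z > x - t) ~ e^{γ t} P(Z > x)` as `x → ∞`, for every `t > 0`. -/
def MemLGamma {Ω : Type*} [MeasureSpace Ω] (Z : Ω → ℝ) (γ : ℝ) : Prop :=
  UnboundedDist Z ∧
    ∀ t > 0, (fun x => rvTail Z (x - t)) ~[atTop] (fun x => Real.exp (γ * t) * rvTail Z x)

/-- The tail of the two-fold convolution of the distribution of `Z` with itself. -/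
def convSqTail {Ω : Type*} [MeasureSpace Ω] (Z : Ω → ℝ) (x : ℝ) : ℝ :=
  (((Measure.map Z ℙ).conv (Measure.map Z ℙ)) (Ioi x)).toReal

/-- The distribution of `Z` belongs to the class `S(γ)`: it belongs to `L(γ)`, the
exponential moment `c = ∫ e^{γ y} dV(y)` is finite, and the tail of the two-fold
convolution satisfies `V̄*²(x) ~ 2 c V̄(x)` as `x → ∞`. -/
def MemSGamma {Ω : Type*} [MeasureSpace Ω] (Z : Ω → ℝ) (γ : ℝ) : Prop :=
  MemLGamma Z γ ∧
    Integrable (fun y => Real.exp (γ * y)) (Measure.map Z ℙ) ∧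
    (fun x => convSqTail Z x) ~[atTop]
      (fun x => 2 * (∫ y, Real.exp (γ * y) ∂(Measure.map Z ℙ)) * rvTail Z x)

open Classical in
/-- `γ / β_G`, where `β_G = sup {y : G(y) < 1}` is the right endpoint of the distribution
of `Z`, with the convention that `γ / β_G = 0` when `β_G = ∞`.
(Note that `G(y) < 1 ↔ P(Z > y) > 0`.) -/
def gammaOverBeta {Ω : Type*} [MeasureSpace Ω] (Z : Ω → ℝ) (γ : ℝ) : ℝ :=
  if BddAbove {y : ℝ | 0 < rvTail Z y} then γ / sSup {y : ℝ | 0 < rvTail Z y} else 0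

/-- Assumption 2: `Ḡ(b x) = o(H̄(x))` as `x → ∞` for every constant `b > 0`, where `G` is
the distribution of `Y` and `H` is the distribution of the product `X Y`. -/
def Assumption2 {Ω : Type*} [MeasureSpace Ω] (X Y : Ω → ℝ) : Prop :=
  ∀ b > 0, (fun x => rvTail Y (b * x)) =o[atTop] fun x => rvTail (fun ω => X ω * Y ω) x

/-- Assumption 1: `K x y` is the conditional probability `P(X > x | Y = y)`, namely for
`y` in the support of `Y` it is the limit of `P(X > x | Y ∈ (y - δ, y + δ])` as `δ → 0+`,
and for `y` outside the support it is the unconditional probability `P(X > x)` (and then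
`h y = 1`); `h : [0,∞) → (0,∞)` is a measurable function such that
`P(X > x | Y = y) ~ h(y) P(X > x)` as `x → ∞`, uniformly for `y ≥ 0`. -/
def Assumption1 {Ω : Type*} [MeasureSpace Ω] (X Y : Ω → ℝ) (h : ℝ → ℝ) (K : ℝ → ℝ → ℝ) :
    Prop :=
  Measurable h ∧ (∀ y, 0 ≤ y → 0 < h y) ∧
    (∀ y, y ∉ distSupport Y → h y = 1 ∧ ∀ x, K x y = rvTail X x) ∧
    (∀ y ∈ distSupport Y, ∀ x : ℝ,
      Tendsto
        (fun δ : ℝ => (ℙ {ω | x < X ω ∧ Y ω ∈ Ioc (y - δ) (y + δ)}).toReal /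
          (ℙ {ω | Y ω ∈ Ioc (y - δ) (y + δ)}).toReal)
        (nhdsWithin 0 (Ioi 0)) (nhds (K x y))) ∧
    ∀ ε > 0, ∀ᶠ x in atTop, ∀ y, 0 ≤ y → |K x y / (h y * rvTail X x) - 1| < ε

/-- `(X, Y)` follows a Farlie–Gumbel–Morgenstern (FGM) distribution with parameter
`θ ∈ [-1, 1]`: `P(X > x, Y > y) = F̄(x) Ḡ(y) (1 + θ F(x) G(y))` for all `x` in the
support of `X` and `y` in the support of `Y`. -/
def FGM {Ω : Type*} [MeasureSpace Ω] (X Y : Ω → ℝ) (θ : ℝ) : Prop :=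
  θ ∈ Icc (-1 : ℝ) 1 ∧
    ∀ x ∈ distSupport X, ∀ y ∈ distSupport Y,
      (ℙ {ω | x < X ω ∧ y < Y ω}).toReal =
        rvTail X x * rvTail Y y * (1 + θ * rvCdf X x * rvCdf Y y)

/-- `(X, Y)` follows a bivariate Sarmanov distribution with kernels `φ₁, φ₂` and
parameter `θ`: the joint law has density `1 + θ φ₁(x) φ₂(y)` with respect to the product
of the marginal laws, where `φ₁, φ₂` are measurable, `E φ₁(X) = E φ₂(Y) = 0` and
`1 + θ φ₁(x) φ₂(y) ≥ 0`. -/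
def Sarmanov {Ω : Type*} [MeasureSpace Ω] (X Y : Ω → ℝ) (φ₁ φ₂ : ℝ → ℝ) (θ : ℝ) : Prop :=
  Measurable φ₁ ∧ Measurable φ₂ ∧
    Integrable (fun ω => φ₁ (X ω)) ℙ ∧ Integrable (fun ω => φ₂ (Y ω)) ℙ ∧
    (∫ ω, φ₁ (X ω)) = 0 ∧ (∫ ω, φ₂ (Y ω)) = 0 ∧
    (∀ x y : ℝ, 0 ≤ y → 0 ≤ 1 + θ * φ₁ x * φ₂ y) ∧
    Measure.map (fun ω => (X ω, Y ω)) ℙ =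
      ((Measure.map X ℙ).prod (Measure.map Y ℙ)).withDensity
        (fun p => ENNReal.ofReal (1 + θ * φ₁ p.1 * φ₂ p.2))

/-- The condition `ψ(y) = lim_{δ → 0+} (∫_{y-δ}^{y+δ} φ₂(v) G(dv)) / (G(y+δ) - G(y-δ))`
for all `y` in the support of `Y`. -/
def SarmanovPsi {Ω : Type*} [MeasureSpace Ω] (Y : Ω → ℝ) (φ₂ ψ : ℝ → ℝ) : Prop :=
  ∀ y ∈ distSupport Y,
    Tendsto
      (fun δ : ℝ => (∫ v in Ioc (y - δ) (y + δ), φ₂ v ∂(Measure.map Y ℙ)) /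
        (rvCdf Y (y + δ) - rvCdf Y (y - δ)))
      (nhdsWithin 0 (Ioi 0)) (nhds (ψ y))

/-!
An FGM pair with parameter `θ` has joint law `(1 + θ φ_F(u) φ_G(v)) d(F ⊗ G)(u, v)`, where
`φ_F = F + F(·-) - 1`: integrating `φ_F` over an upper set `A` gives `F(A) F(Aᶜ)` (a symmetry
argument on `F ⊗ F`), so this measure has marginals `F`, `G` and the FGM quadrant probabilities.
Quadrants `(x, ∞) × (y, ∞)` with `x`, `y` in the supports already determine a law with given
marginals, since moving `x` to the last support point below it changes no probability.
Integrating `u` out over `{u > x / v}` then gives, for `θ = -1`,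
`P(XY > x) = ∫_{v > 0} (1 - φ_G(v)) F̄(x/v) dG(v) + ∫_{v > 0} φ_G(v) F̄(x/v)² dG(v)`.
As `G` has an atom at its right endpoint `β`, `1 - φ_G ≥ G{β}` on the support of `G`, while
`F̄(x/v) ≤ F̄(x/β) → 0` there; so the second integral is `o` of the first.
-/

open Topology

lemma Measure.prod_setOf_fst_mem_snd_mem_apply {α β : Type*} [MeasurableSpace α]
    [MeasurableSpace β] {μ : Measure α} {ν : Measure β} [SFinite ν] {A : Set α}
    (hA : MeasurableSet A) (r : α → Set β) (hr : MeasurableSet {p : α × β | p.2 ∈ r p.1}) :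
    (μ.prod ν) {p | p.1 ∈ A ∧ p.2 ∈ r p.1} = ∫⁻ x in A, ν (r x) ∂μ := by
  have hS : MeasurableSet {p : α × β | p.1 ∈ A ∧ p.2 ∈ r p.1} :=
    (hA.preimage measurable_fst).inter hr
  rw [Measure.prod_apply hS, ← lintegral_indicator hA]
  congr 1 with x
  by_cases hx : x ∈ A <;> simp [hx]

lemma measureReal_withDensity_ofReal {α : Type*} [MeasurableSpace α] {μ : Measure α}
    {f : α → ℝ} (hf : Integrable f μ) (hf₀ : 0 ≤ f) {s : Set α} (hs : MeasurableSet s) :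
    (μ.withDensity fun x => ENNReal.ofReal (f x)).real s = ∫ x in s, f x ∂μ := by
  rw [measureReal_def, withDensity_apply _ hs,
    ← ofReal_integral_eq_lintegral_ofReal hf.integrableOn (ae_of_all _ fun x => hf₀ x),
    ENNReal.toReal_ofReal (setIntegral_nonneg hs fun x _ => hf₀ x)]

lemma Measure.measure_prod_congr {α β : Type*} [MeasurableSpace α] [MeasurableSpace β]
    {μ : Measure (α × β)} {s s' : Set α} {t t' : Set β} (hs : s =ᵐ[μ.fst] s')
    (ht : t =ᵐ[μ.snd] t') : μ (s ×ˢ t) = μ (s' ×ˢ t') :=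
  measure_congr <| (ae_eq_comp (f := Prod.fst) measurable_fst.aemeasurable hs).inter
    (ae_eq_comp (f := Prod.snd) measurable_snd.aemeasurable ht)

lemma Measure.mem_support_iff_Ioo {ν : Measure ℝ} {y : ℝ} :
    y ∈ ν.support ↔ ∀ δ > 0, 0 < ν (Ioo (y - δ) (y + δ)) := by
  simp [Metric.nhds_basis_ball.mem_measureSupport, Real.ball_eq_Ioo]

lemma Measure.Ioi_ae_eq_univ_or_Ioi_mem_support (ν : Measure ℝ) (x : ℝ) :
    Ioi x =ᵐ[ν] univ ∨ ∃ a ∈ ν.support, Ioi x =ᵐ[ν] Ioi a := by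
  by_cases hne : (ν.support ∩ Iic x).Nonempty
  · right
    have hbdd : BddAbove (ν.support ∩ Iic x) := ⟨x, fun _ h => h.2⟩
    obtain ⟨haS, hax⟩ := (Measure.isClosed_support.inter isClosed_Iic).csSup_mem hne hbdd
    refine ⟨_, haS, ae_eq_set.2 ⟨?_, ?_⟩⟩
    · rw [sdiff_eq_empty.2 (Ioi_subset_Ioi (mem_Iic.1 hax)), measure_empty]
    refine measure_mono_null (fun z hz => ?_) Measure.measure_compl_support
    exact fun hzS => not_le.2 hz.1 (le_csSup hbdd ⟨hzS, mem_Iic.2 (not_lt.1 hz.2)⟩)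
  · left
    refine ae_eq_set.2 ⟨by simp, measure_mono_null (fun z hz hzS => hne ⟨z, hzS, ?_⟩)
      Measure.measure_compl_support⟩
    simpa using hz

lemma Measure.ext_of_Ioi_prod_Ioi {μ ν : Measure (ℝ × ℝ)} [IsFiniteMeasure μ]
    (h : ∀ x y, μ (Ioi x ×ˢ Ioi y) = ν (Ioi x ×ˢ Ioi y)) : μ = ν := by
  have hspan : IsCountablySpanning (range (Ioi : ℝ → Set ℝ)) :=
    ⟨fun n : ℕ => Ioi (-n), fun n => mem_range_self _,
      iUnion_eq_univ_iff.2 fun z => (exists_nat_gt (-z)).imp fun n hn => neg_lt.1 hn⟩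
  have hgen : (inferInstance : MeasurableSpace (ℝ × ℝ)) = MeasurableSpace.generateFrom
      (image2 (· ×ˢ ·) (range (Ioi : ℝ → Set ℝ)) (range (Ioi : ℝ → Set ℝ))) := by
    rw [← generateFrom_prod_eq hspan hspan, ← borel_eq_generateFrom_Ioi,
      ← BorelSpace.measurable_eq]
  refine Measure.ext_of_generateFrom_of_iUnion _ (fun n : ℕ => Ioi (-n : ℝ) ×ˢ Ioi (-n : ℝ))
    hgen (isPiSystem_Ioi.prod isPiSystem_Ioi) ?_ (fun n => mem_image2_of_mem ⟨_, rfl⟩ ⟨_, rfl⟩)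
    (fun n => measure_ne_top _ _) ?_
  · exact iUnion_eq_univ_iff.2 fun p => (exists_nat_gt (max (-p.1) (-p.2))).imp fun n hn =>
      ⟨neg_lt.1 ((le_max_left _ _).trans_lt hn), neg_lt.1 ((le_max_right _ _).trans_lt hn)⟩
  · rintro _ ⟨_, ⟨x, rfl⟩, _, ⟨y, rfl⟩, rfl⟩
    exact h x y

lemma Measure.measure_Ioi_prod_Ioi_eq_of_mem_support {μ ν : Measure (ℝ × ℝ)}
    (hfst : μ.fst = ν.fst) (hsnd : μ.snd = ν.snd)
    (h : ∀ a ∈ μ.fst.support, ∀ b ∈ μ.snd.support,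
      μ (Ioi a ×ˢ Ioi b) = ν (Ioi a ×ˢ Ioi b))
    (x y : ℝ) : μ (Ioi x ×ˢ Ioi y) = ν (Ioi x ×ˢ Ioi y) := by
  obtain ⟨A, hxA, hA⟩ :
      ∃ A, Ioi x =ᵐ[μ.fst] A ∧ (A = univ ∨ ∃ a ∈ μ.fst.support, A = Ioi a) := by
    rcases Measure.Ioi_ae_eq_univ_or_Ioi_mem_support μ.fst x with hx | ⟨a, ha, hx⟩
    exacts [⟨_, hx, Or.inl rfl⟩, ⟨_, hx, Or.inr ⟨a, ha, rfl⟩⟩]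
  obtain ⟨B, hyB, hB⟩ :
      ∃ B, Ioi y =ᵐ[μ.snd] B ∧ (B = univ ∨ ∃ b ∈ μ.snd.support, B = Ioi b) := by
    rcases Measure.Ioi_ae_eq_univ_or_Ioi_mem_support μ.snd y with hy | ⟨b, hb, hy⟩
    exacts [⟨_, hy, Or.inl rfl⟩, ⟨_, hy, Or.inr ⟨b, hb, rfl⟩⟩]
  rw [Measure.measure_prod_congr hxA hyB, Measure.measure_prod_congr (hfst ▸ hxA) (hsnd ▸ hyB)]
  rcases hA with rfl | ⟨a, ha, rfl⟩ <;> rcases hB with rfl | ⟨b, hb, rfl⟩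
  · rw [univ_prod_univ, ← Measure.fst_univ, ← Measure.fst_univ, hfst]
  · rw [univ_prod, ← Measure.snd_apply measurableSet_Ioi,
      ← Measure.snd_apply measurableSet_Ioi, hsnd]
  · rw [prod_univ, ← Measure.fst_apply measurableSet_Ioi,
      ← Measure.fst_apply measurableSet_Ioi, hfst]
  · exact h a ha b hb

lemma tendsto_measureReal_Ioi_atTop (ν : Measure ℝ) [IsProbabilityMeasure ν] :
    Tendsto (fun x => ν.real (Ioi x)) atTop (𝓝 0) := by
  have h := (tendsto_cdf_atTop (μ := ν)).const_sub 1
  rw [sub_self] at h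
  refine h.congr fun x => ?_
  rw [cdf_eq_real, ← compl_Iic, probReal_compl_eq_one_sub measurableSet_Iic]

lemma measure_Ioi_eq_zero_of_forall_lt {ν : Measure ℝ} {b : ℝ}
    (h : ∀ w, b < w → ν (Ioi w) = 0) : ν (Ioi b) = 0 := by
  have hunion : Ioi b = ⋃ n : ℕ, Ioi (b + 1 / (n + 1)) := by
    ext z
    simp only [mem_Ioi, mem_iUnion]
    refine ⟨fun hz => ?_, fun ⟨n, hn⟩ => (lt_add_of_pos_right b (by positivity)).trans hn⟩
    obtain ⟨n, hn⟩ := exists_nat_one_div_lt (sub_pos.2 hz)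
    exact ⟨n, by linarith⟩
  rw [hunion]
  exact measure_iUnion_null fun n => h _ (lt_add_of_pos_right b (by positivity))

lemma measure_Ioi_sSup_eq_zero {ν : Measure ℝ} [IsProbabilityMeasure ν]
    (hbdd : BddAbove {y | ν.real (Iic y) < 1}) :
    ν (Ioi (sSup {y | ν.real (Iic y) < 1})) = 0 := by
  refine measure_Ioi_eq_zero_of_forall_lt fun w hw => ?_
  have hw' : ¬ ν.real (Iic w) < 1 := fun h => not_le.2 hw (le_csSup hbdd h)
  rw [← measureReal_eq_zero_iff, ← compl_Iic, probReal_compl_eq_one_sub measurableSet_Iic]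
  linarith [measureReal_le_one (μ := ν) (s := Iic w)]

section MidCdf

variable {μ ν : Measure ℝ}

lemma lintegral_measure_Iic_add_measure_Iio_add_sq_compl [IsProbabilityMeasure ν] {A : Set ℝ}
    (hA : MeasurableSet A) (hup : IsUpperSet A) :
    (∫⁻ v in A, (ν (Iic v) + ν (Iio v)) ∂ν) + ν Aᶜ * ν Aᶜ = 1 := by
  set S₁ : Set (ℝ × ℝ) := {p | p.1 ∈ A ∧ p.2 ∈ Iic p.1}
  set S₂ : Set (ℝ × ℝ) := {p | p.1 ∈ A ∧ p.2 ∈ Iio p.1}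
  have hS₂ : MeasurableSet S₂ :=
    (hA.preimage measurable_fst).inter (measurableSet_lt measurable_snd measurable_fst)
  have hS₁_eq : (ν.prod ν) S₁ = ∫⁻ v in A, ν (Iic v) ∂ν :=
    Measure.prod_setOf_fst_mem_snd_mem_apply hA _ (measurableSet_le measurable_snd measurable_fst)
  have hS₂_eq : (ν.prod ν) (Prod.swap ⁻¹' S₂) = ∫⁻ v in A, ν (Iio v) ∂ν := by
    rw [Measure.measurePreserving_swap.measure_preimage hS₂.nullMeasurableSet]
    exact Measure.prod_setOf_fst_mem_snd_mem_apply hA _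
      (measurableSet_lt measurable_snd measurable_fst)
  have hdisj : Disjoint S₁ (Prod.swap ⁻¹' S₂) := by
    rw [Set.disjoint_left]
    rintro ⟨u, v⟩ ⟨-, h₁⟩ ⟨-, h₂⟩
    exact lt_irrefl u (lt_of_lt_of_le h₂ h₁)
  -- a pair lies outside `Aᶜ ×ˢ Aᶜ` iff its larger coordinate lies in the upper set `A`
  have hcover : S₁ ∪ Prod.swap ⁻¹' S₂ = (Aᶜ ×ˢ Aᶜ)ᶜ := by
    ext ⟨u, v⟩
    simp only [S₁, S₂, mem_union, mem_preimage, Prod.swap_prod_mk, mem_ofPred_eq, mem_Iic,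
      mem_Iio, mem_compl_iff, mem_prod, not_and_or, not_not]
    constructor
    · rintro (⟨hu, -⟩ | ⟨hv, -⟩)
      exacts [Or.inl hu, Or.inr hv]
    · intro h
      rcases le_or_gt v u with hvu | huv
      · exact Or.inl ⟨h.elim id (hup hvu), hvu⟩
      · exact Or.inr ⟨h.elim (hup huv.le) id, huv⟩
  rw [lintegral_add_left (Monotone.measurable fun _ _ h => measure_mono (Iic_subset_Iic.2 h)),
    ← hS₁_eq, ← hS₂_eq, ← measure_union hdisj (hS₂.preimage measurable_swap), hcover,
    ← Measure.prod_prod, add_comm, measure_add_measure_compl (hA.compl.prod hA.compl),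
    measure_univ]

-- The paper's `G(y) + G(y-) - 1`; for continuous `ν` it is `2 F - 1`.
def centeredMidCdf (ν : Measure ℝ) (x : ℝ) : ℝ := ν.real (Iic x) + ν.real (Iio x) - 1

lemma monotone_centeredMidCdf [IsFiniteMeasure ν] : Monotone (centeredMidCdf ν) := fun _ _ h => by
  unfold centeredMidCdf
  gcongr <;> finiteness

lemma measurable_centeredMidCdf [IsFiniteMeasure ν] : Measurable (centeredMidCdf ν) :=
  monotone_centeredMidCdf.measurable

lemma abs_centeredMidCdf_le_one [IsProbabilityMeasure ν] (x : ℝ) :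
    |centeredMidCdf ν x| ≤ 1 := by
  have h₁ : ν.real (Iio x) ≤ ν.real (Iic x) := measureReal_mono Iio_subset_Iic_self
  have h₂ : ν.real (Iic x) ≤ 1 := measureReal_le_one
  unfold centeredMidCdf
  rw [abs_le]
  constructor <;> linarith [measureReal_nonneg (μ := ν) (s := Iio x)]

lemma integrable_centeredMidCdf [IsProbabilityMeasure ν] [IsFiniteMeasure μ] :
    Integrable (centeredMidCdf ν) μ :=
  .of_bound measurable_centeredMidCdf.aestronglyMeasurable 1 (ae_of_all _ abs_centeredMidCdf_le_one)

lemma setIntegral_centeredMidCdf [IsProbabilityMeasure ν] {A : Set ℝ} (hA : MeasurableSet A)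
    (hup : IsUpperSet A) : ∫ v in A, centeredMidCdf ν v ∂ν = ν.real A * ν.real Aᶜ := by
  have hL := lintegral_measure_Iic_add_measure_Iio_add_sq_compl hA hup (ν := ν)
  have hL_ne_top : ∫⁻ v in A, (ν (Iic v) + ν (Iio v)) ∂ν ≠ ⊤ :=
    ne_top_of_le_ne_top ENNReal.one_ne_top (hL ▸ le_self_add)
  have hsum :
      ∫ v in A, (ν.real (Iic v) + ν.real (Iio v)) ∂ν = 1 - ν.real Aᶜ * ν.real Aᶜ := by
    have hmeas : Measurable fun v => ν (Iic v) + ν (Iio v) :=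
      (Monotone.measurable fun _ _ h => measure_mono (Iic_subset_Iic.2 h)).add
        (Monotone.measurable fun _ _ h => measure_mono (Iio_subset_Iio h))
    have := congrArg ENNReal.toReal hL
    rw [ENNReal.toReal_add hL_ne_top (by finiteness), ENNReal.toReal_mul,
      ← integral_toReal hmeas.aemeasurable (ae_of_all _ fun v => by finiteness)] at this
    simp only [ENNReal.toReal_add (measure_ne_top _ _) (measure_ne_top _ _),
      ENNReal.toReal_one, ← measureReal_def] at this
    linarith
  have hsplit : ∫ v in A, (ν.real (Iic v) + ν.real (Iio v)) ∂ν
      = ∫ v in A, centeredMidCdf ν v ∂ν + ν.real A := by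
    have h1 : ∫ _ in A, (1 : ℝ) ∂ν = ν.real A := by simp
    rw [← h1, ← integral_add integrable_centeredMidCdf (integrable_const _)]
    simp [centeredMidCdf]
  rw [probReal_compl_eq_one_sub hA] at hsum ⊢
  linarith

lemma integral_centeredMidCdf [IsProbabilityMeasure ν] : ∫ v, centeredMidCdf ν v ∂ν = 0 := by
  simpa using setIntegral_centeredMidCdf MeasurableSet.univ isUpperSet_univ (ν := ν)

lemma measureReal_singleton_le_one_sub_centeredMidCdf {ν : Measure ℝ} [IsProbabilityMeasure ν]
    {v b : ℝ} (hvb : v ≤ b) : ν.real {b} ≤ 1 - centeredMidCdf ν v := by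
  have h₁ : ν.real (Iio v) ≤ ν.real (Iio b) := measureReal_mono (Iio_subset_Iio hvb)
  have h₂ : ν.real (Iio b) + ν.real {b} ≤ 1 := by
    have hdisj : Disjoint (Iio b) {b} := by simp
    rw [← measureReal_union hdisj (measurableSet_singleton b), Iio_union_right]
    exact measureReal_le_one
  have h₃ : ν.real (Iic v) ≤ 1 := measureReal_le_one
  unfold centeredMidCdf
  linarith

end MidCdf

section FGMMeasure

variable (θ : ℝ) (F G : Measure ℝ)

-- With atoms in the marginals it is this density, not `1 + θ (2F - 1)(2G - 1)`, whose quadrant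
-- probabilities are `F̄ Ḡ (1 + θ F G)`.
def fgmDensity (p : ℝ × ℝ) : ℝ := 1 + θ * centeredMidCdf F p.1 * centeredMidCdf G p.2

def fgmMeasure : Measure (ℝ × ℝ) :=
  (F.prod G).withDensity fun p => ENNReal.ofReal (fgmDensity θ F G p)

variable {θ F G} [IsProbabilityMeasure F]

lemma setIntegral_fgmDensity_left {A : Set ℝ} (hA : MeasurableSet A) (hup : IsUpperSet A)
    (v : ℝ) : ∫ u in A, fgmDensity θ F G (u, v) ∂F
      = F.real A * (1 + θ * centeredMidCdf G v * F.real Aᶜ) := by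
  simp only [fgmDensity]
  rw [integral_add (integrable_const 1) ((integrable_centeredMidCdf.const_mul θ).mul_const _),
    integral_mul_const, integral_const_mul, setIntegral_centeredMidCdf hA hup]
  simp only [integral_const, smul_eq_mul, mul_one, measureReal_restrict_apply_univ]
  ring

variable [IsProbabilityMeasure G]

lemma measurable_fgmDensity : Measurable (fgmDensity θ F G) := by
  unfold fgmDensity
  have := measurable_centeredMidCdf (ν := F)
  have := measurable_centeredMidCdf (ν := G)
  fun_prop

lemma abs_centeredMidCdf_mul_le_one (x y : ℝ) :
    |θ * centeredMidCdf F x * centeredMidCdf G y| ≤ |θ| := by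
  rw [abs_mul, abs_mul, mul_assoc]
  exact mul_le_of_le_one_right (abs_nonneg θ)
    (mul_le_one₀ (abs_centeredMidCdf_le_one x) (abs_nonneg _) (abs_centeredMidCdf_le_one y))

lemma fgmDensity_nonneg (hθ : |θ| ≤ 1) (p : ℝ × ℝ) : 0 ≤ fgmDensity θ F G p := by
  have := (abs_le.1 ((abs_centeredMidCdf_mul_le_one (F := F) (G := G) p.1 p.2).trans hθ)).1
  unfold fgmDensity
  linarith

lemma integrable_fgmDensity {μ : Measure (ℝ × ℝ)} [IsFiniteMeasure μ] :
    Integrable (fgmDensity θ F G) μ := by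
  refine .of_bound measurable_fgmDensity.aestronglyMeasurable (1 + |θ|) (ae_of_all _ fun p => ?_)
  unfold fgmDensity
  exact (norm_add_le _ _).trans
    (by simpa using abs_centeredMidCdf_mul_le_one (F := F) (G := G) p.1 p.2)

instance : IsFiniteMeasure (fgmMeasure θ F G) :=
  isFiniteMeasure_withDensity_ofReal integrable_fgmDensity.2

lemma measureReal_fgmMeasure (hθ : |θ| ≤ 1) {S : Set (ℝ × ℝ)} (hS : MeasurableSet S) :
    (fgmMeasure θ F G).real S = ∫ p in S, fgmDensity θ F G p ∂(F.prod G) :=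
  measureReal_withDensity_ofReal integrable_fgmDensity (fgmDensity_nonneg hθ) hS

lemma measureReal_fgmMeasure_prod (hθ : |θ| ≤ 1) {s t : Set ℝ} (hs : MeasurableSet s)
    (ht : MeasurableSet t) :
    (fgmMeasure θ F G).real (s ×ˢ t) = F.real s * G.real t
      + θ * (∫ u in s, centeredMidCdf F u ∂F) * ∫ v in t, centeredMidCdf G v ∂G := by
  have hprod : Integrable (fun p : ℝ × ℝ => centeredMidCdf F p.1 * centeredMidCdf G p.2)
      ((F.restrict s).prod (G.restrict t)) :=
    integrable_centeredMidCdf.mul_prod integrable_centeredMidCdf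
  rw [measureReal_fgmMeasure hθ (hs.prod ht), ← Measure.prod_restrict]
  simp only [fgmDensity, mul_assoc]
  rw [integral_add (integrable_const 1) (hprod.const_mul θ), integral_const_mul,
    integral_prod_mul]
  simp [← univ_prod_univ, measureReal_prod_prod]

lemma fgmMeasure_fst (hθ : |θ| ≤ 1) : (fgmMeasure θ F G).fst = F := by
  ext s hs
  rw [← ENNReal.toReal_eq_toReal_iff' (measure_ne_top _ _) (measure_ne_top _ _)]
  change (fgmMeasure θ F G).fst.real s = F.real s
  rw [Measure.fst, map_measureReal_apply measurable_fst hs, ← prod_univ,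
    measureReal_fgmMeasure_prod hθ hs MeasurableSet.univ]
  simp [integral_centeredMidCdf]

lemma fgmMeasure_snd (hθ : |θ| ≤ 1) : (fgmMeasure θ F G).snd = G := by
  ext s hs
  rw [← ENNReal.toReal_eq_toReal_iff' (measure_ne_top _ _) (measure_ne_top _ _)]
  change (fgmMeasure θ F G).snd.real s = G.real s
  rw [Measure.snd, map_measureReal_apply measurable_snd hs, ← univ_prod,
    measureReal_fgmMeasure_prod hθ MeasurableSet.univ hs]
  simp [integral_centeredMidCdf]

lemma measureReal_fgmMeasure_Ioi_prod_Ioi (hθ : |θ| ≤ 1) (x y : ℝ) :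
    (fgmMeasure θ F G).real (Ioi x ×ˢ Ioi y)
      = F.real (Ioi x) * G.real (Ioi y) * (1 + θ * F.real (Iic x) * G.real (Iic y)) := by
  rw [measureReal_fgmMeasure_prod hθ measurableSet_Ioi measurableSet_Ioi,
    setIntegral_centeredMidCdf measurableSet_Ioi (isUpperSet_Ioi _),
    setIntegral_centeredMidCdf measurableSet_Ioi (isUpperSet_Ioi _), compl_Ioi, compl_Ioi]
  ring

lemma measureReal_fgmMeasure_lt_mul (hθ : |θ| ≤ 1) (x : ℝ) :
    (fgmMeasure θ F G).real {p | x < p.1 * p.2 ∧ 0 < p.2}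
      = ∫ v in Ioi 0,
          F.real (Ioi (x / v)) * (1 + θ * centeredMidCdf G v * F.real (Iic (x / v))) ∂G := by
  set S : Set (ℝ × ℝ) := {p | x < p.1 * p.2 ∧ 0 < p.2}
  have hS : MeasurableSet S := (measurableSet_lt measurable_const
    (measurable_fst.mul measurable_snd)).inter (measurableSet_lt measurable_const measurable_snd)
  have hslice : ∀ u v, S.indicator (fgmDensity θ F G) (u, v) = (Ioi 0).indicator
      (fun v => (Ioi (x / v)).indicator (fun u => fgmDensity θ F G (u, v)) u) v := by
    intro u v
    by_cases hv : 0 < v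
    · simp [S, indicator_apply, hv, div_lt_iff₀ hv]
    · simp [S, indicator_apply, hv]
  rw [measureReal_fgmMeasure hθ hS, ← integral_indicator hS,
    integral_prod_symm _ (integrable_fgmDensity.indicator hS),
    ← integral_indicator measurableSet_Ioi]
  congr 1 with v
  simp_rw [hslice]
  by_cases hv : 0 < v
  · simp [hv, integral_indicator measurableSet_Ioi,
      setIntegral_fgmDensity_left measurableSet_Ioi (isUpperSet_Ioi _)]
  · simp [hv]

end FGMMeasure

section Asymptotics

variable {F G : Measure ℝ} [IsProbabilityMeasure F] [IsProbabilityMeasure G] {β : ℝ}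

lemma abs_centeredMidCdf_mul_sq_le {x v : ℝ} (hx : 0 ≤ x) (hv : 0 < v) (hvβ : v ≤ β)
    (hβ : 0 < G.real {β}) :
    |centeredMidCdf G v * F.real (Ioi (x / v)) ^ 2| ≤
      F.real (Ioi (x / β)) / G.real {β} * ((1 - centeredMidCdf G v) * F.real (Ioi (x / v))) := by
  set t := F.real (Ioi (x / v))
  have hmono : t ≤ F.real (Ioi (x / β)) :=
    measureReal_mono (Ioi_subset_Ioi (div_le_div_of_nonneg_left hx hv hvβ))
  have hatom : 1 ≤ (1 - centeredMidCdf G v) / G.real {β} :=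
    (one_le_div hβ).2 (measureReal_singleton_le_one_sub_centeredMidCdf hvβ)
  have ht : 0 ≤ t := measureReal_nonneg
  calc |centeredMidCdf G v * t ^ 2| = |centeredMidCdf G v| * t * t := by
        rw [abs_mul, abs_of_nonneg (sq_nonneg t)]; ring
    _ ≤ 1 * F.real (Ioi (x / β)) * t := by
        gcongr
        exact abs_centeredMidCdf_le_one v
    _ ≤ (1 - centeredMidCdf G v) / G.real {β} * F.real (Ioi (x / β)) * t := by gcongr
    _ = _ := by ring

lemma measurable_measureReal_Ioi_div (x : ℝ) : Measurable fun v => F.real (Ioi (x / v)) :=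
  (Antitone.measurable fun _ _ h => measureReal_mono (Ioi_subset_Ioi h)).comp
    (measurable_const.div measurable_id)

lemma norm_measureReal_Ioi_div_le_one (x v : ℝ) : ‖F.real (Ioi (x / v))‖ ≤ 1 := by
  rw [Real.norm_of_nonneg measureReal_nonneg]
  exact measureReal_le_one

lemma integrable_one_sub_centeredMidCdf_mul {μ : Measure ℝ} [IsFiniteMeasure μ] (x : ℝ) :
    Integrable (fun v => (1 - centeredMidCdf G v) * F.real (Ioi (x / v))) μ :=
  ((integrable_const 1).sub integrable_centeredMidCdf).mul_bdd
    (measurable_measureReal_Ioi_div x).aestronglyMeasurable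
    (ae_of_all _ (norm_measureReal_Ioi_div_le_one x))

lemma integrable_centeredMidCdf_mul_sq {μ : Measure ℝ} [IsFiniteMeasure μ] (x : ℝ) :
    Integrable (fun v => centeredMidCdf G v * F.real (Ioi (x / v)) ^ 2) μ :=
  integrable_centeredMidCdf.mul_bdd
    ((measurable_measureReal_Ioi_div x).pow_const 2).aestronglyMeasurable
    (ae_of_all _ fun v => by
      rw [norm_pow]
      exact pow_le_one₀ (norm_nonneg _) (norm_measureReal_Ioi_div_le_one x v))

lemma abs_integral_centeredMidCdf_mul_sq_le (hGβ : G (Ioi β) = 0) (hatom : 0 < G.real {β})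
    {x : ℝ} (hx : 0 ≤ x) :
    |∫ v in Ioi 0, centeredMidCdf G v * F.real (Ioi (x / v)) ^ 2 ∂G| ≤
      F.real (Ioi (x / β)) / G.real {β} *
        ∫ v in Ioi 0, (1 - centeredMidCdf G v) * F.real (Ioi (x / v)) ∂G := by
  have hle_β : ∀ᵐ v ∂G.restrict (Ioi 0), v ≤ β :=
    ae_restrict_of_ae ((measure_eq_zero_iff_ae_notMem.1 hGβ).mono fun v hv => not_lt.1 hv)
  rw [← Real.norm_eq_abs, ← integral_const_mul]
  refine norm_integral_le_of_norm_le ((integrable_one_sub_centeredMidCdf_mul x).const_mul _) ?_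
  filter_upwards [hle_β, ae_restrict_mem measurableSet_Ioi] with v hvβ hv
  exact abs_centeredMidCdf_mul_sq_le hx hv hvβ hatom

theorem isEquivalent_integral_tail_of_atom (hβ : 0 < β) (hGβ : G (Ioi β) = 0)
    (hatom : 0 < G.real {β}) :
    (fun x => ∫ v in Ioi 0,
        F.real (Ioi (x / v)) * (1 - centeredMidCdf G v * F.real (Iic (x / v))) ∂G)
      ~[atTop] fun x => ∫ v in Ioi 0, (1 - centeredMidCdf G v) * F.real (Ioi (x / v)) ∂G := by
  set I := fun x => ∫ v in Ioi 0, (1 - centeredMidCdf G v) * F.real (Ioi (x / v)) ∂G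
  set J := fun x => ∫ v in Ioi 0, centeredMidCdf G v * F.real (Ioi (x / v)) ^ 2 ∂G
  set ε := fun x => F.real (Ioi (x / β)) / G.real {β}
  have hsplit : (fun x => ∫ v in Ioi 0,
      F.real (Ioi (x / v)) * (1 - centeredMidCdf G v * F.real (Iic (x / v))) ∂G) = J + I := by
    ext x
    rw [Pi.add_apply, ← integral_add (integrable_centeredMidCdf_mul_sq x)
      (integrable_one_sub_centeredMidCdf_mul x)]
    congr 1 with v
    rw [← compl_Ioi, probReal_compl_eq_one_sub measurableSet_Ioi]
    ring
  have hε : Tendsto ε atTop (𝓝 0) := by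
    simpa using ((tendsto_measureReal_Ioi_atTop F).comp
      (tendsto_id.atTop_div_const hβ)).div_const (G.real {β})
  have hJI : J =o[atTop] I := by
    refine IsBigO.trans_isLittleO (g := fun x => ε x * I x) ?_ ?_
    · refine IsBigO.of_bound 1 ((eventually_ge_atTop 0).mono fun x hx => ?_)
      rw [one_mul, Real.norm_eq_abs, Real.norm_eq_abs]
      exact (abs_integral_centeredMidCdf_mul_sq_le hGβ hatom hx).trans (le_abs_self _)
    · simpa using ((isLittleO_one_iff ℝ).2 hε).mul_isBigO (isBigO_refl I atTop)
  rw [hsplit]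
  exact hJI.add_isEquivalent IsEquivalent.refl

end Asymptotics

section RandomVariables

variable {Ω : Type*} [MeasureSpace Ω] {X Y Z : Ω → ℝ}

lemma rvTail_eq (hZ : Measurable Z) (x : ℝ) : rvTail Z x = (Measure.map Z ℙ).real (Ioi x) :=
  (map_measureReal_apply hZ measurableSet_Ioi).symm

lemma rvCdf_eq (hZ : Measurable Z) (x : ℝ) : rvCdf Z x = (Measure.map Z ℙ).real (Iic x) :=
  (map_measureReal_apply hZ measurableSet_Iic).symm

lemma rvCdfLeft_eq (hZ : Measurable Z) (x : ℝ) :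
    rvCdfLeft Z x = (Measure.map Z ℙ).real (Iio x) :=
  (map_measureReal_apply hZ measurableSet_Iio).symm

lemma distSupport_eq (hZ : Measurable Z) : distSupport Z = (Measure.map Z ℙ).support := by
  ext y
  simp only [Measure.mem_support_iff_Ioo, Measure.map_apply hZ measurableSet_Ioo]
  rfl

lemma FGM.map_prodMk_eq_fgmMeasure [IsProbabilityMeasure (ℙ : Measure Ω)] {θ : ℝ}
    (hX : Measurable X) (hY : Measurable Y) (h : FGM X Y θ) :
    Measure.map (fun ω => (X ω, Y ω)) ℙ
      = fgmMeasure θ (Measure.map X ℙ) (Measure.map Y ℙ) := by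
  have hθ : |θ| ≤ 1 := abs_le.2 h.1
  have := Measure.isProbabilityMeasure_map (μ := ℙ) hX.aemeasurable
  have := Measure.isProbabilityMeasure_map (μ := ℙ) hY.aemeasurable
  have hfst : (Measure.map (fun ω => (X ω, Y ω)) ℙ).fst
      = (fgmMeasure θ (Measure.map X ℙ) (Measure.map Y ℙ)).fst := by
    rw [Measure.fst_map_prodMk hY, fgmMeasure_fst hθ]
  have hsnd : (Measure.map (fun ω => (X ω, Y ω)) ℙ).snd
      = (fgmMeasure θ (Measure.map X ℙ) (Measure.map Y ℙ)).snd := by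
    rw [Measure.snd_map_prodMk hX, fgmMeasure_snd hθ]
  refine Measure.ext_of_Ioi_prod_Ioi (Measure.measure_Ioi_prod_Ioi_eq_of_mem_support hfst hsnd ?_)
  intro a ha b hb
  rw [Measure.fst_map_prodMk hY, ← distSupport_eq hX] at ha
  rw [Measure.snd_map_prodMk hX, ← distSupport_eq hY] at hb
  rw [← ENNReal.toReal_eq_toReal_iff' (measure_ne_top _ _) (measure_ne_top _ _)]
  change (Measure.map _ ℙ).real _ = (fgmMeasure _ _ _).real _
  rw [measureReal_fgmMeasure_Ioi_prod_Ioi hθ, map_measureReal_apply (hX.prodMk hY)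
    (measurableSet_Ioi.prod measurableSet_Ioi), ← rvTail_eq hX, ← rvTail_eq hY, ← rvCdf_eq hX,
    ← rvCdf_eq hY, ← h.2 a ha b hb]
  rfl

lemma rvTail_mul_eq (hX : Measurable X) (hY : Measurable Y) (hY₀ : ∀ ω, 0 ≤ Y ω) {x : ℝ}
    (hx : 0 ≤ x) : rvTail (fun ω => X ω * Y ω) x
      = (Measure.map (fun ω => (X ω, Y ω)) ℙ).real {p | x < p.1 * p.2 ∧ 0 < p.2} := by
  have hS : MeasurableSet {p : ℝ × ℝ | x < p.1 * p.2 ∧ 0 < p.2} :=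
    (measurableSet_lt measurable_const (measurable_fst.mul measurable_snd)).inter
      (measurableSet_lt measurable_const measurable_snd)
  rw [map_measureReal_apply (hX.prodMk hY) hS]
  change (ℙ : Measure Ω).real _ = _
  congr 1
  ext ω
  refine ⟨fun h => ⟨h, (hY₀ ω).lt_of_ne fun h0 => ?_⟩, And.left⟩
  simp only [mem_ofPred_eq, ← h0, mul_zero] at h
  linarith

end RandomVariables

theorem product_tail_asymp_of_fgm_theta_neg_one_general {Ω : Type*} [MeasureSpace Ω] [IsProbabilityMeasure (ℙ : Measure Ω)]
    (X Y : Ω → ℝ) (hXm : Measurable X) (hYm : Measurable Y)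
    (hYnonneg : ∀ ω, 0 ≤ Y ω)
    (hYnd : ℙ {ω | Y ω = 0} ≠ 1)
    (hFGM : FGM X Y (-1))
    (hbdd : BddAbove {y : ℝ | rvCdf Y y < 1})
    (hatom : 0 < ℙ {ω | Y ω = sSup {y : ℝ | rvCdf Y y < 1}}) :
    (fun x => rvTail (fun ω => X ω * Y ω) x) ~[atTop]
      (fun x => ∫ y in Ioi (0 : ℝ),
        (1 - (rvCdf Y y + rvCdfLeft Y y - 1)) * rvTail X (x / y) ∂(Measure.map Y ℙ)) := by
  have := Measure.isProbabilityMeasure_map (μ := ℙ) hXm.aemeasurable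
  have := Measure.isProbabilityMeasure_map (μ := ℙ) hYm.aemeasurable
  simp only [rvCdf_eq hYm, rvCdfLeft_eq hYm, rvTail_eq hXm] at hbdd hatom ⊢
  set G := Measure.map Y ℙ
  set β := sSup {y | G.real (Iic y) < 1}
  have hGβ : G (Ioi β) = 0 := measure_Ioi_sSup_eq_zero hbdd
  have hβ : 0 < β := by
    by_contra! hβ
    refine hYnd ((prob_compl_eq_zero_iff (hYm (measurableSet_singleton 0))).1 ?_)
    have hpos : (Y ⁻¹' {0})ᶜ = Y ⁻¹' Ioi 0 := by
      ext ω
      simp [(hYnonneg ω).lt_iff_ne']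
    rw [hpos, ← Measure.map_apply hYm measurableSet_Ioi]
    exact measure_mono_null (Ioi_subset_Ioi hβ) hGβ
  have hatomG : 0 < G.real {β} := by
    rw [map_measureReal_apply hYm (measurableSet_singleton _)]
    exact ENNReal.toReal_pos hatom.ne' (measure_ne_top _ _)
  refine (isEquivalent_integral_tail_of_atom hβ hGβ hatomG).congr_left ?_
  filter_upwards [eventually_ge_atTop 0] with x hx
  rw [rvTail_mul_eq hXm hYm hYnonneg hx, hFGM.map_prodMk_eq_fgmMeasure hXm hYm,
    measureReal_fgmMeasure_lt_mul (by norm_num)]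
  simp [G, ← sub_eq_add_neg]

theorem product_tail_asymp_of_fgm_theta_neg_one {Ω : Type*} [MeasureSpace Ω] [IsProbabilityMeasure (ℙ : Measure Ω)]
    (X Y : Ω → ℝ) (hXm : Measurable X) (hYm : Measurable Y)
    (hYnonneg : ∀ ω, 0 ≤ Y ω)
    (hFunb : UnboundedDist X)
    (hXnd : ℙ {ω | X ω = 0} ≠ 1) (hYnd : ℙ {ω | Y ω = 0} ≠ 1)
    (hFGM : FGM X Y (-1))
    (hbdd : BddAbove {y : ℝ | rvCdf Y y < 1})
    (hatom : 0 < ℙ {ω | Y ω = sSup {y : ℝ | rvCdf Y y < 1}})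
    (hA2 : Assumption2 X Y) :
    (fun x => rvTail (fun ω => X ω * Y ω) x) ~[atTop]
      (fun x => ∫ y in Ioi (0 : ℝ),
        (1 - (rvCdf Y y + rvCdfLeft Y y - 1)) * rvTail X (x / y) ∂(Measure.map Y ℙ)) :=
  product_tail_asymp_of_fgm_theta_neg_one_general X Y hXm hYm hYnonneg hYnd hFGM hbdd hatom
end
end

section
/- Let X be a real-valued random variable with unbounded distribution F and Y a nonnegative random variable with distribution G, neither degenerate at zero, and suppose (X,Y) satisfies Assumption 1: there is a measurable function h:[0,∞)→(0,∞) such that P(X>x | Y=y) ~ h(y)P(X>x) as x→∞ uniformly in y≥0. Then (i) h is bounded above on the support D_Y of Y, i.e. there exists a constant M>0 such that h(y)≤M for all y∈D_Y, and (ii) E(h(Y))=1. -/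
open MeasureTheory ProbabilityTheory Filter Set Asymptotics

noncomputable section

/-!
The conditional tail `K x y` is, for a.e. `y`, the Radon–Nikodym derivative at `y` of
`B ↦ P(X > x, Y ∈ B)` with respect to the law `G` of `Y`: Besicovitch differentiation gives
this along closed balls, and these agree with the half-open windows of Assumption 1 for all
radii avoiding the countably many atoms. Hence `∫ K x y dG(y) = P(X > x)`.

Assumption 1 says `K x y / P(X > x) → h y` uniformly in `y`. Since `K ≤ 1`, a single `x`
with `P(X > x) > 0` bounds `h` on the support, and dominated convergence then gives
`E h(Y) = lim ∫ K x y / P(X > x) dG(y) = 1`.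
-/

open Topology

theorem Set.Countable.frequently_nhdsGT_notMem {S : Set ℝ} (hS : S.Countable) (a : ℝ) :
    ∃ᶠ δ in 𝓝[>] a, δ ∉ S := by
  rw [Filter.frequently_iff]
  intro U hU
  obtain ⟨b, hab, hsub⟩ := mem_nhdsGT_iff_exists_Ioo_subset.1 hU
  obtain ⟨c, hcS, hc⟩ := (hS.dense_compl ℝ).exists_between hab
  exact ⟨c, hsub hc, hcS⟩

theorem ae_eq_toReal_rnDeriv_of_tendsto_measureReal_Ioc_div {μ ν : Measure ℝ}
    [IsLocallyFiniteMeasure μ] [IsLocallyFiniteMeasure ν] {f : ℝ → ℝ}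
    (hf : ∀ᵐ y ∂μ, Tendsto (fun δ => ν.real (Ioc (y - δ) (y + δ)) / μ.real (Ioc (y - δ) (y + δ)))
      (𝓝[>] 0) (𝓝 (f y))) :
    f =ᵐ[μ] fun y => (ν.rnDeriv μ y).toReal := by
  filter_upwards [hf, Besicovitch.ae_tendsto_rnDeriv ν μ, ν.rnDeriv_lt_top μ] with y hfy hB hfin
  have hBall : Tendsto (fun δ => ν.real (Icc (y - δ) (y + δ)) / μ.real (Icc (y - δ) (y + δ)))
      (𝓝[>] 0) (𝓝 (ν.rnDeriv μ y).toReal) := by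
    simpa only [Function.comp_def, ENNReal.toReal_div, Real.closedBall_eq_Icc, measureReal_def]
      using (ENNReal.tendsto_toReal hfin.ne).comp hB
  -- Closed balls and half-open intervals differ by the left endpoint, which is an atom of
  -- `μ + ν` only for countably many radii.
  have hatoms : {δ : ℝ | 0 < (μ + ν) {y - δ}}.Countable := by
    have hS := Measure.countable_meas_level_set_pos (μ := μ + ν) (measurable_id (α := ℝ))
    refine (hS.preimage (sub_right_injective (b := y))).mono fun δ hδ => ?_
    simpa [ofPred_eq_eq_singleton] using hδ
  refine tendsto_nhds_unique_of_frequently_eq hfy hBall ?_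
  refine (hatoms.frequently_nhdsGT_notMem 0).mono fun δ hδ => ?_
  simp only [mem_ofPred_eq, not_lt, nonpos_iff_eq_zero, Measure.add_apply, add_eq_zero] at hδ
  simp only [measureReal_def, measure_congr (Ioc_ae_eq_Icc' hδ.1),
    measure_congr (Ioc_ae_eq_Icc' hδ.2)]

theorem integrable_and_integral_map_eq_measureReal_of_tendsto_ratio {Ω : Type*}
    [MeasurableSpace Ω] {P : Measure Ω} [IsFiniteMeasure P] {Y : Ω → ℝ} (hY : Measurable Y)
    (A : Set Ω) {k : ℝ → ℝ}
    (hk : ∀ᵐ y ∂P.map Y, Tendsto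
      (fun δ => P.real (A ∩ Y ⁻¹' Ioc (y - δ) (y + δ)) / P.real (Y ⁻¹' Ioc (y - δ) (y + δ)))
      (𝓝[>] 0) (𝓝 (k y))) :
    Integrable k (P.map Y) ∧ ∫ y, k y ∂P.map Y = P.real A := by
  set ν := (P.restrict A).map Y
  have hν : ∀ s, MeasurableSet s → ν.real s = P.real (A ∩ Y ⁻¹' s) := fun s hs => by
    rw [measureReal_def, Measure.map_apply hY hs, Measure.restrict_apply (hY hs), inter_comm,
      measureReal_def]
  have hμ : ∀ s, MeasurableSet s → (P.map Y).real s = P.real (Y ⁻¹' s) := fun s hs =>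
    map_measureReal_apply hY hs
  have hνμ : ν ≪ P.map Y := (Measure.map_mono Measure.restrict_le_self hY).absolutelyContinuous
  have hk_eq : k =ᵐ[P.map Y] fun y => (ν.rnDeriv (P.map Y) y).toReal := by
    refine ae_eq_toReal_rnDeriv_of_tendsto_measureReal_Ioc_div (hk.mono fun y hy => ?_)
    simpa only [hν _ measurableSet_Ioc, hμ _ measurableSet_Ioc] using hy
  refine ⟨Measure.integrable_toReal_rnDeriv.congr hk_eq.symm, ?_⟩
  rw [integral_congr_ae hk_eq, Measure.integral_toReal_rnDeriv hνμ, hν _ MeasurableSet.univ,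
    preimage_univ, inter_univ]

section Support

variable {Ω : Type*} [MeasureSpace Ω] {Y : Ω → ℝ}

theorem distSupport_eq_support (hY : Measurable Y) :
    distSupport Y = (Measure.map Y ℙ).support := by
  ext y
  rw [(nhds_basis_Ioo_pos y).mem_measureSupport]
  exact forall₂_congr fun δ _ => by rw [Measure.map_apply hY measurableSet_Ioo]; rfl

theorem ae_mem_distSupport (hY : Measurable Y) : ∀ᵐ y ∂Measure.map Y ℙ, y ∈ distSupport Y := by
  rw [distSupport_eq_support hY]
  exact Measure.support_mem_ae

theorem nonneg_of_mem_distSupport (hY : ∀ ω, 0 ≤ Y ω) {y : ℝ} (hy : y ∈ distSupport Y) :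
    0 ≤ y := by
  by_contra! hneg
  have hempty : {ω | Y ω ∈ Ioo (y - -y) (y + -y)} = ∅ :=
    eq_empty_of_forall_notMem fun ω hω => by linarith [hY ω, hω.2]
  simpa only [hempty, measure_empty, lt_self_iff_false] using hy (-y) (neg_pos.2 hneg)

end Support

namespace Assumption1

variable {Ω : Type*} [MeasureSpace Ω] {X Y : Ω → ℝ} {h : ℝ → ℝ} {K : ℝ → ℝ → ℝ}

theorem integrable_and_integral_eq_rvTail [IsFiniteMeasure (ℙ : Measure Ω)]
    (hA1 : Assumption1 X Y h K) (hY : Measurable Y) (x : ℝ) :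
    Integrable (K x) (Measure.map Y ℙ) ∧ ∫ y, K x y ∂Measure.map Y ℙ = rvTail X x :=
  let ⟨_, _, _, hK, _⟩ := hA1
  integrable_and_integral_map_eq_measureReal_of_tendsto_ratio hY {ω | x < X ω}
    ((ae_mem_distSupport hY).mono fun y hy => hK y hy x)

theorem le_one [IsFiniteMeasure (ℙ : Measure Ω)] (hA1 : Assumption1 X Y h K) {y : ℝ}
    (hy : y ∈ distSupport Y) (x : ℝ) : K x y ≤ 1 :=
  let ⟨_, _, _, hK, _⟩ := hA1
  le_of_tendsto (hK y hy x) <| Eventually.of_forall fun _ =>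
    div_le_one_of_le₀ (measureReal_mono fun _ hω => hω.2) measureReal_nonneg

theorem eventually_div_rvTail_mem_Icc (hA1 : Assumption1 X Y h K) :
    ∀ᶠ x in atTop, ∀ y, 0 ≤ y → K x y / rvTail X x ∈ Icc (h y / 2) (2 * h y) := by
  obtain ⟨-, hpos, -, -, hunif⟩ := hA1
  filter_upwards [hunif (1 / 2) one_half_pos] with x hx y hy
  have hhy := hpos y hy
  have hr := abs_lt.1 (hx y hy)
  have hfactor : K x y / rvTail X x = h y * (K x y / (h y * rvTail X x)) := by
    rw [← mul_div_assoc, mul_div_mul_left _ _ hhy.ne']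
  rw [hfactor]
  constructor <;> nlinarith

theorem tendsto_div_rvTail (hA1 : Assumption1 X Y h K) {y : ℝ} (hy : 0 ≤ y) :
    Tendsto (fun x => K x y / rvTail X x) atTop (𝓝 (h y)) := by
  obtain ⟨-, hpos, -, -, hunif⟩ := hA1
  have hratio : Tendsto (fun x => K x y / (h y * rvTail X x)) atTop (𝓝 1) :=
    Metric.tendsto_nhds.2 fun ε hε =>
      (hunif ε hε).mono fun x hx => by simpa only [Real.dist_eq] using hx y hy
  have hne := (hpos y hy).ne'
  simpa only [mul_one, ← mul_div_assoc, mul_div_mul_left _ _ hne] using hratio.const_mul (h y)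

theorem exists_bound [IsFiniteMeasure (ℙ : Measure Ω)] (hA1 : Assumption1 X Y h K)
    (hY : ∀ ω, 0 ≤ Y ω) (hX : UnboundedDist X) :
    ∃ M > 0, ∀ y ∈ distSupport Y, h y ≤ M := by
  obtain ⟨x, hx, hxpos⟩ := (hA1.eventually_div_rvTail_mem_Icc.and (eventually_gt_atTop 0)).exists
  have hT := hX x hxpos
  refine ⟨2 / rvTail X x, div_pos two_pos hT, fun y hy => ?_⟩
  have hlow := (hx y (nonneg_of_mem_distSupport hY hy)).1
  calc h y ≤ 2 * (K x y / rvTail X x) := by linarith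
    _ ≤ 2 * (1 / rvTail X x) := by gcongr; exact hA1.le_one hy x
    _ = 2 / rvTail X x := by ring

theorem integrable_map [IsFiniteMeasure (ℙ : Measure Ω)] (hA1 : Assumption1 X Y h K)
    (hYm : Measurable Y) (hY : ∀ ω, 0 ≤ Y ω) (hX : UnboundedDist X) :
    Integrable h (Measure.map Y ℙ) := by
  obtain ⟨M, -, hM⟩ := hA1.exists_bound hY hX
  obtain ⟨hmeas, hpos, -, -, -⟩ := hA1
  refine .of_bound hmeas.aestronglyMeasurable M ?_
  filter_upwards [ae_mem_distSupport hYm] with y hy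
  rw [Real.norm_of_nonneg (hpos y (nonneg_of_mem_distSupport hY hy)).le]
  exact hM y hy

theorem integral_map_eq_one [IsFiniteMeasure (ℙ : Measure Ω)] (hA1 : Assumption1 X Y h K)
    (hYm : Measurable Y) (hY : ∀ ω, 0 ≤ Y ω) (hX : UnboundedDist X) :
    ∫ y, h y ∂Measure.map Y ℙ = 1 := by
  obtain ⟨M, -, hM⟩ := hA1.exists_bound hY hX
  have hlim : Tendsto (fun x => ∫ y, K x y / rvTail X x ∂Measure.map Y ℙ) atTop
      (𝓝 (∫ y, h y ∂Measure.map Y ℙ)) := by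
    refine tendsto_integral_filter_of_dominated_convergence (fun _ => 2 * M)
      (.of_forall fun x => ((hA1.integrable_and_integral_eq_rvTail hYm x).1.div_const _)
        |>.aestronglyMeasurable) ?_ (integrable_const _) ?_
    · filter_upwards [hA1.eventually_div_rvTail_mem_Icc] with x hx
      filter_upwards [ae_mem_distSupport hYm] with y hy
      have hy0 := nonneg_of_mem_distSupport hY hy
      have hbounds := hx y hy0
      rw [Real.norm_eq_abs, abs_le]
      constructor <;> linarith [hM y hy, hA1.2.1 y hy0, hbounds.1, hbounds.2]
    · filter_upwards [ae_mem_distSupport hYm] with y hy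
      exact hA1.tendsto_div_rvTail (nonneg_of_mem_distSupport hY hy)
  refine tendsto_nhds_unique_of_eventuallyEq hlim tendsto_const_nhds ?_
  filter_upwards [eventually_gt_atTop 0] with x hx
  rw [integral_div, (hA1.integrable_and_integral_eq_rvTail hYm x).2, div_self (hX x hx).ne']

end Assumption1

theorem assumption1_h_bounded_and_mean_one_general {Ω : Type*} [MeasureSpace Ω] [IsProbabilityMeasure (ℙ : Measure Ω)]
    (X Y : Ω → ℝ) (hYm : Measurable Y)
    (hYnonneg : ∀ ω, 0 ≤ Y ω)
    (hFunb : UnboundedDist X)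
    (h : ℝ → ℝ) (K : ℝ → ℝ → ℝ) (hA1 : Assumption1 X Y h K) :
    (∃ M > 0, ∀ y ∈ distSupport Y, h y ≤ M) ∧
      Integrable (fun ω => h (Y ω)) ℙ ∧ (∫ ω, h (Y ω)) = 1 := by
  refine ⟨hA1.exists_bound hYnonneg hFunb,
    (hA1.integrable_map hYm hYnonneg hFunb).comp_measurable hYm, ?_⟩
  rw [← integral_map hYm.aemeasurable hA1.1.aestronglyMeasurable]
  exact hA1.integral_map_eq_one hYm hYnonneg hFunb

theorem assumption1_h_bounded_and_mean_one {Ω : Type*} [MeasureSpace Ω] [IsProbabilityMeasure (ℙ : Measure Ω)]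
    (X Y : Ω → ℝ) (hXm : Measurable X) (hYm : Measurable Y)
    (hYnonneg : ∀ ω, 0 ≤ Y ω)
    (hFunb : UnboundedDist X)
    (hXnd : ℙ {ω | X ω = 0} ≠ 1) (hYnd : ℙ {ω | Y ω = 0} ≠ 1)
    (h : ℝ → ℝ) (K : ℝ → ℝ → ℝ) (hA1 : Assumption1 X Y h K) :
    (∃ M > 0, ∀ y ∈ distSupport Y, h y ≤ M) ∧
      Integrable (fun ω => h (Y ω)) ℙ ∧ (∫ ω, h (Y ω)) = 1 :=
  assumption1_h_bounded_and_mean_one_general X Y hYm hYnonneg hFunb h K hA1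
end
end
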